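/- The Artinian algebra C = K[y_1,...,y_n]/(y_1^2,...,y_n^2, y_1 y_2 ⋯ y_{n-1}) (the initial ideal of the AOT algebra of the n-cycle) has the Weak Lefschetz Property for char K = 0. -/

import Mathlib

open MvPolynomial

/-- The degree-`n` graded piece of the quotient of a polynomial ring by a
(homogeneous) ideal: the image of the homogeneous degree-`n` polynomials. -/
noncomputable def gradedPiece {K σ : Type*} [Field K] (I : Ideal (MvPolynomial σ K))
    (n : ℕ) : Submodule K (MvPolynomial σ K ⧸ I) :=
  Submodule.map (Ideal.Quotient.mkₐ K I).toLinearMap (homogeneousSubmodule σ K n)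

/-- The ideal `(y_1^2, …, y_n^2, y_1 y_2 ⋯ y_{n-1})`, the initial ideal of the
Artinian Orlik–Terao ideal of the `n`-cycle. -/
noncomputable def cycleInitIdeal (K : Type*) [Field K] (n : ℕ) :
    Ideal (MvPolynomial (Fin n) K) :=
  Ideal.span ((Set.range fun k : Fin n => (X k : MvPolynomial (Fin n) K) ^ 2) ∪
    {∏ k ∈ Finset.univ.filter (fun k : Fin n => (k : ℕ) < n - 1), X k})

/-!
Reading off the coefficients of squarefree monomials identifies the degree-`d` piece of
`K[y_1, …, y_n] / (y_1^2, …, y_n^2)` with `K`-valued functions on the `d`-subsets of `Fin n`, and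
multiplication by `ℓ = y_1 + ⋯ + y_n` with the up operator of the Boolean lattice. Up and its
adjoint down satisfy the `sl₂` relation `down ∘ up - up ∘ down = n - 2d` in degree `d`; iterating
it on a kernel vector `x` of up gives `up (down^[k+1] x) = -(k+1)(n-2d+k) • down^[k] x`, so in
characteristic `0` up is injective below the middle degree. Complementation `S ↦ Sᶜ` exchanges up
and down, and duality then makes up surjective above the middle.

The extra generator `y_1 ⋯ y_{n-1}` does not touch degrees `≤ n - 2`, where injectivity is
needed; in higher degrees only surjectivity is needed, and there it only enlarges the ideal.
-/

namespace BooleanLefschetz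

open Finset

variable {K α : Type*}

section CommRing

variable [CommRing K]

variable (K α) in
def homog (d : ℕ) : Submodule K (Finset α → K) where
  carrier := {x | ∀ S : Finset α, S.card ≠ d → x S = 0}
  zero_mem' _ _ := rfl
  add_mem' hx hy S hS := by simp [hx S hS, hy S hS]
  smul_mem' c x hx S hS := by simp [hx S hS]

theorem card_eq_of_mem_homog {d : ℕ} {x : Finset α → K} (hx : x ∈ homog K α d)
    {S : Finset α} (hS : x S ≠ 0) : S.card = d :=
  not_imp_comm.mp (hx S) hS

def degreePart (d : ℕ) (x : Finset α → K) : Finset α → K := fun S => if S.card = d then x S else 0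

theorem degreePart_mem_homog (d : ℕ) (x : Finset α → K) : degreePart d x ∈ homog K α d :=
  fun _ hS => if_neg hS

theorem dotProduct_degreePart [Fintype α] {d : ℕ} {y : Finset α → K} (hy : y ∈ homog K α d)
    (x : Finset α → K) : y ⬝ᵥ degreePart d x = y ⬝ᵥ x := by
  refine sum_congr rfl fun S _ => ?_
  by_cases hS : S.card = d
  · simp [degreePart, hS]
  · simp [hy S hS]

variable [DecidableEq α]

def up : (Finset α → K) →ₗ[K] (Finset α → K) where
  toFun x T := ∑ j ∈ T, x (T.erase j)
  map_add' x y := by ext; simp [sum_add_distrib]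
  map_smul' c x := by ext; simp [mul_sum]

theorem up_apply (x : Finset α → K) (T : Finset α) : up x T = ∑ j ∈ T, x (T.erase j) := rfl

variable [Fintype α]

def down : (Finset α → K) →ₗ[K] (Finset α → K) where
  toFun x S := ∑ j ∈ Sᶜ, x (insert j S)
  map_add' x y := by ext; simp [sum_add_distrib]
  map_smul' c x := by ext; simp [mul_sum]

theorem down_apply (x : Finset α → K) (S : Finset α) :
    down x S = ∑ j ∈ Sᶜ, x (insert j S) := rfl

theorem down_mem_homog {d : ℕ} {x : Finset α → K} (hx : x ∈ homog K α d) :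
    down x ∈ homog K α (d - 1) := by
  intro S hS
  refine sum_eq_zero fun j hj => hx _ ?_
  rw [card_insert_of_notMem (mem_compl.mp hj)]
  omega

theorem down_eq_zero_of_mem_homog_zero {x : Finset α → K} (hx : x ∈ homog K α 0) :
    down x = 0 := by
  ext S
  exact sum_eq_zero fun j _ => hx _ (insert_nonempty j S).card_ne_zero

theorem iterate_down_mem_homog {d : ℕ} {x : Finset α → K} (hx : x ∈ homog K α d) (k : ℕ) :
    down^[k] x ∈ homog K α (d - k) := by
  induction k with
  | zero => exact hx
  | succ k ih =>
    rw [Function.iterate_succ_apply', ← Nat.sub_sub]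
    exact down_mem_homog ih

theorem iterate_down_eq_zero {d : ℕ} {x : Finset α → K} (hx : x ∈ homog K α d) :
    down^[d + 1] x = 0 := by
  rw [Function.iterate_succ_apply']
  exact down_eq_zero_of_mem_homog_zero (by simpa using iterate_down_mem_homog hx d)

theorem down_degreePart (d : ℕ) (x : Finset α → K) :
    down (degreePart (d + 1) x) = degreePart d (down x) := by
  ext S
  simp only [down_apply, degreePart]
  split_ifs with hS
  · refine sum_congr rfl fun j hj => ?_
    rw [card_insert_of_notMem (mem_compl.mp hj), hS, if_pos rfl]
  · refine sum_eq_zero fun j hj => ?_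
    rw [card_insert_of_notMem (mem_compl.mp hj), if_neg (by omega)]

theorem down_up_apply_add (x : Finset α → K) (S : Finset α) :
    down (up x) S + S.card • x S = up (down x) S + Sᶜ.card • x S := by
  have hdu : down (up x) S = ∑ j ∈ Sᶜ, x S + ∑ j ∈ Sᶜ, ∑ k ∈ S, x (insert j (S.erase k)) := by
    rw [down_apply, ← sum_add_distrib]
    refine sum_congr rfl fun j hj => ?_
    have hjS : j ∉ S := mem_compl.mp hj
    rw [up_apply, sum_insert hjS, erase_insert hjS]
    congr 1
    exact sum_congr rfl fun k hk => by rw [erase_insert_of_ne (ne_of_mem_of_not_mem hk hjS).symm]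
  have hud : up (down x) S = ∑ k ∈ S, x S + ∑ k ∈ S, ∑ j ∈ Sᶜ, x (insert j (S.erase k)) := by
    rw [up_apply, ← sum_add_distrib]
    refine sum_congr rfl fun k hk => ?_
    have hcompl : (S.erase k)ᶜ = insert k Sᶜ := by
      ext a
      simp only [mem_compl, mem_erase, mem_insert]
      tauto
    rw [down_apply, hcompl, sum_insert (by simp [hk]), insert_erase hk]
  rw [hdu, hud, sum_comm (s := Sᶜ), sum_const, sum_const]
  abel

theorem up_down_eq_smul {d : ℕ} {x : Finset α → K} (hx : x ∈ homog K α d) {a : K}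
    (h : down (up x) = a • x) :
    up (down x) = (a - (Fintype.card α - 2 * d)) • x := by
  ext S
  have hcomm := down_up_apply_add x S
  rw [h] at hcomm
  by_cases hS : x S = 0
  · simpa [hS] using hcomm.symm
  · have hcompl : (Sᶜ.card : K) = Fintype.card α - d := by
      rw [card_compl, Nat.cast_sub (card_le_univ S), card_eq_of_mem_homog hx hS]
    simp only [Pi.smul_apply, smul_eq_mul, nsmul_eq_mul, card_eq_of_mem_homog hx hS,
      hcompl] at hcomm ⊢
    linear_combination hcomm.symm

theorem up_iterate_down {d : ℕ} {x : Finset α → K} (hx : x ∈ homog K α d) (hup : up x = 0)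
    {k : ℕ} (hk : k ≤ d) :
    up (down^[k + 1] x) = -((k + 1) * (Fintype.card α - 2 * d + k) : K) • down^[k] x := by
  induction k with
  | zero =>
    rw [Function.iterate_one, up_down_eq_smul hx (a := 0) (by simp [hup])]
    congr 1
    ring
  | succ k ih =>
    have hdu : down (up (down^[k + 1] x)) = -((k + 1) * (Fintype.card α - 2 * d + k) : K) •
        down^[k + 1] x := by
      rw [ih (by omega), map_smul, ← Function.iterate_succ_apply' down]
    rw [Function.iterate_succ_apply' down (k + 1),
      up_down_eq_smul (iterate_down_mem_homog hx (k + 1)) hdu, Nat.cast_sub hk]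
    congr 1
    push_cast
    ring

theorem up_compl (x : Finset α → K) : up (fun S => x Sᶜ) = fun S => down x Sᶜ := by
  ext T
  rw [up_apply, down_apply, compl_compl]
  refine sum_congr rfl fun j hj => congrArg x ?_
  ext a
  by_cases ha : a = j <;> simp [ha, hj]

theorem up_dotProduct (x y : Finset α → K) : up x ⬝ᵥ y = x ⬝ᵥ down y := by
  simp only [dotProduct, up_apply, down_apply, sum_mul, mul_sum]
  rw [sum_sigma', sum_sigma']
  refine sum_bij' (fun p _ => ⟨p.1.erase p.2, p.2⟩) (fun q _ => ⟨insert q.2 q.1, q.2⟩)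
    ?_ ?_ ?_ ?_ ?_ <;> rintro ⟨S, j⟩ h <;> simp_all

end CommRing

section Field

variable [Field K] [CharZero K] [DecidableEq α] [Fintype α]

theorem eq_zero_of_up_eq_zero {d : ℕ} (hd : 2 * d < Fintype.card α)
    {x : Finset α → K} (hx : x ∈ homog K α d) (hup : up x = 0) : x = 0 := by
  have step (k : ℕ) (hk : k < d + 1) (h : down^[k + 1] x = 0) : down^[k] x = 0 := by
    have hcoeff : ((k + 1) * (Fintype.card α - 2 * d + k) : K) ≠ 0 := by
      have : ((Fintype.card α - 2 * d + k : ℕ) : K) ≠ 0 := by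
        exact_mod_cast (show Fintype.card α - 2 * d + k ≠ 0 by omega)
      push_cast [Nat.cast_sub hd.le] at this
      exact mul_ne_zero k.cast_add_one_ne_zero this
    have := up_iterate_down hx hup (Nat.lt_succ_iff.mp hk)
    rw [h, map_zero, eq_comm, smul_eq_zero, neg_eq_zero] at this
    exact this.resolve_left hcoeff
  exact Nat.decreasingInduction (motive := fun k _ => down^[k] x = 0) step
    (iterate_down_eq_zero hx) (Nat.zero_le _)

theorem eq_zero_of_down_eq_zero {d : ℕ} (hd : Fintype.card α < 2 * d)
    (hd' : d ≤ Fintype.card α) {x : Finset α → K} (hx : x ∈ homog K α d) (hdown : down x = 0) :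
    x = 0 := by
  have hxc : (fun S => x Sᶜ) ∈ homog K α (Fintype.card α - d) := fun S hS =>
    hx _ fun h => hS (by rw [← h, card_compl, Nat.sub_sub_self (card_le_univ S)])
  have := eq_zero_of_up_eq_zero (by omega) hxc (by rw [up_compl, hdown]; rfl)
  ext S
  simpa using congrFun this Sᶜ

/-- Dually: a functional `v ↦ v ⬝ᵥ g` vanishing on `up (homog d)` has `down g` vanishing in
degree `d`, so the degree-`(d + 1)` part of `g` is killed by `down`, hence is zero. -/
theorem mem_map_up_homog {d : ℕ} (hd : Fintype.card α < 2 * (d + 1))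
    (hd' : d + 1 ≤ Fintype.card α) {y : Finset α → K} (hy : y ∈ homog K α (d + 1)) :
    y ∈ (homog K α d).map up := by
  rw [← Subspace.forall_mem_dualAnnihilator_apply_eq_zero_iff]
  intro φ hφ
  rw [Submodule.mem_dualAnnihilator] at hφ
  set g : Finset α → K := fun S => φ (Pi.single S 1)
  have hφg (v : Finset α → K) : φ v = v ⬝ᵥ g := by
    rw [φ.pi_apply_eq_sum_univ v]
    refine sum_congr rfl fun S _ => ?_
    rw [smul_eq_mul]
    congr 2
    ext T
    simp [Pi.single_apply, eq_comm]
  have hdown : down (degreePart (d + 1) g) = 0 := by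
    rw [down_degreePart]
    ext S
    simp only [degreePart, Pi.zero_apply]
    split_ifs with hS
    · have hsingle : (Pi.single S 1 : Finset α → K) ∈ homog K α d := fun T hT =>
        Pi.single_eq_of_ne (by rintro rfl; exact hT hS) 1
      have := hφ _ (Submodule.mem_map_of_mem (f := up) hsingle)
      rwa [hφg, up_dotProduct, single_dotProduct, one_mul] at this
    · rfl
  rw [hφg, ← dotProduct_degreePart hy,
    eq_zero_of_down_eq_zero hd hd' (degreePart_mem_homog _ _) hdown, dotProduct_zero]

end Field

end BooleanLefschetz

namespace CycleInitIdeal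

open Finset BooleanLefschetz

noncomputable section

variable {σ K : Type*}

def squarefreeExp (S : Finset σ) : σ →₀ ℕ := ∑ k ∈ S, Finsupp.single k 1

theorem degree_squarefreeExp (S : Finset σ) : (squarefreeExp S).degree = S.card := by
  simp [squarefreeExp, Finsupp.degree_single]

theorem isHomogeneous_sum_X [CommSemiring K] [Fintype σ] :
    (∑ k, X k : MvPolynomial σ K).IsHomogeneous 1 :=
  IsHomogeneous.sum _ _ _ fun k _ => isHomogeneous_X K k

theorem monomial_squarefreeExp [CommSemiring K] (S : Finset σ) :
    monomial (squarefreeExp S) (1 : K) = ∏ k ∈ S, X k := by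
  rw [squarefreeExp, monomial_sum_one]
  rfl

section DecidableEq

variable [DecidableEq σ]

theorem squarefreeExp_apply (S : Finset σ) (k : σ) :
    squarefreeExp S k = if k ∈ S then 1 else 0 := by
  simp [squarefreeExp, Finsupp.single_apply]

theorem squarefreeExp_le_squarefreeExp {S T : Finset σ} :
    squarefreeExp S ≤ squarefreeExp T ↔ S ⊆ T := by
  refine Finsupp.le_def.trans (forall_congr' fun k => ?_)
  simp only [squarefreeExp_apply]
  split_ifs <;> simp_all

theorem squarefreeExp_injective : Function.Injective (squarefreeExp (σ := σ)) := fun _ _ h =>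
  (squarefreeExp_le_squarefreeExp.mp h.le).antisymm (squarefreeExp_le_squarefreeExp.mp h.ge)

theorem support_squarefreeExp (S : Finset σ) : (squarefreeExp S).support = S := by
  ext k
  simp [Finsupp.mem_support_iff, squarefreeExp_apply]

theorem squarefreeExp_support {m : σ →₀ ℕ} (hm : ∀ k, m k ≤ 1) : squarefreeExp m.support = m := by
  ext k
  rw [squarefreeExp_apply]
  split_ifs with h
  · exact ((hm k).antisymm (Nat.one_le_iff_ne_zero.mpr (Finsupp.mem_support_iff.mp h))).symm
  · exact (Finsupp.notMem_support_iff.mp h).symm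

theorem squarefreeExp_sub_single {S : Finset σ} {k : σ} (hk : k ∈ S) :
    squarefreeExp S - Finsupp.single k 1 = squarefreeExp (S.erase k) := by
  rw [← insert_erase hk, squarefreeExp, sum_insert (notMem_erase k S), ← squarefreeExp,
    add_tsub_cancel_left, erase_insert (notMem_erase k S)]

theorem not_single_two_le_squarefreeExp (S : Finset σ) (k : σ) :
    ¬ Finsupp.single k 2 ≤ squarefreeExp S := fun h => by
  have := h k
  rw [Finsupp.single_eq_same, squarefreeExp_apply] at this
  split_ifs at this <;> omega

end DecidableEq

variable [CommRing K]

def squarefreeCoeffs : MvPolynomial σ K →ₗ[K] (Finset σ → K) :=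
  LinearMap.pi fun S => lcoeff K (squarefreeExp S)

theorem squarefreeCoeffs_apply (p : MvPolynomial σ K) (S : Finset σ) :
    squarefreeCoeffs p S = coeff (squarefreeExp S) p := rfl

theorem squarefreeCoeffs_mem_homog {p : MvPolynomial σ K} {d : ℕ} (hp : p.IsHomogeneous d) :
    squarefreeCoeffs p ∈ homog K σ d := fun _ hS =>
  hp.coeff_eq_zero (by rwa [degree_squarefreeExp])

variable [Fintype σ]

def ofSquarefreeCoeffs (x : Finset σ → K) : MvPolynomial σ K :=
  ∑ S, monomial (squarefreeExp S) (x S)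

theorem isHomogeneous_ofSquarefreeCoeffs {x : Finset σ → K} {d : ℕ}
    (hx : x ∈ homog K σ d) : (ofSquarefreeCoeffs x).IsHomogeneous d := by
  refine IsHomogeneous.sum _ _ _ fun S _ => ?_
  by_cases hS : x S = 0
  · rw [hS, map_zero]
    exact isHomogeneous_zero _ _ _
  · exact isHomogeneous_monomial _ (by rw [degree_squarefreeExp, card_eq_of_mem_homog hx hS])

variable [DecidableEq σ]

theorem squarefreeCoeffs_ofSquarefreeCoeffs (x : Finset σ → K) :
    squarefreeCoeffs (ofSquarefreeCoeffs x) = x := by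
  ext S
  simp [squarefreeCoeffs_apply, ofSquarefreeCoeffs, coeff_sum, coeff_monomial,
    squarefreeExp_injective.eq_iff]

theorem squarefreeCoeffs_sum_X_mul (p : MvPolynomial σ K) :
    squarefreeCoeffs ((∑ k, X k) * p) = up (squarefreeCoeffs p) := by
  ext T
  simp only [squarefreeCoeffs_apply, up_apply, sum_mul, coeff_sum, coeff_X_mul',
    support_squarefreeExp]
  rw [sum_ite_mem, univ_inter]
  exact sum_congr rfl fun k hk => by rw [squarefreeExp_sub_single hk]

end

theorem cycleInitIdeal_eq_span_monomial (K : Type*) [Field K] (n : ℕ) :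
    cycleInitIdeal K n = Ideal.span ((fun s => monomial s (1 : K)) ''
      (Set.range (fun k : Fin n => Finsupp.single k 2) ∪
        {squarefreeExp ({k | (k : ℕ) < n - 1} : Finset (Fin n))})) := by
  rw [cycleInitIdeal, Set.image_union, Set.image_singleton, ← Set.range_comp,
    monomial_squarefreeExp]
  simp only [Function.comp_def, X_pow_eq_monomial]

variable {K : Type*} [Field K] {n : ℕ} {p : MvPolynomial (Fin n) K}

theorem mem_cycleInitIdeal_iff :
    p ∈ cycleInitIdeal K n ↔
      ∀ S, squarefreeCoeffs p S ≠ 0 → ({k | (k : ℕ) < n - 1} : Finset (Fin n)) ⊆ S := by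
  rw [cycleInitIdeal_eq_span_monomial, mem_ideal_span_monomial_image]
  constructor
  · intro h S hS
    obtain ⟨s, hs, hle⟩ := h _ (mem_support_iff.mpr hS)
    rcases hs with ⟨k, rfl⟩ | rfl
    · exact absurd hle (not_single_two_le_squarefreeExp S k)
    · exact squarefreeExp_le_squarefreeExp.mp hle
  · intro h m hm
    by_cases hsq : ∃ k, 2 ≤ m k
    · obtain ⟨k, hk⟩ := hsq
      exact ⟨_, Or.inl ⟨k, rfl⟩, Finsupp.single_le_iff.mpr hk⟩
    · push Not at hsq
      rw [← squarefreeExp_support fun k => Nat.lt_succ_iff.mp (hsq k)] at hm ⊢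
      exact ⟨_, Or.inr rfl, squarefreeExp_le_squarefreeExp.mpr (h _ (mem_support_iff.mp hm))⟩

theorem mem_cycleInitIdeal_of_squarefreeCoeffs_eq_zero (hp : squarefreeCoeffs p = 0) :
    p ∈ cycleInitIdeal K n :=
  mem_cycleInitIdeal_iff.mpr fun S hS => absurd (congrFun hp S) hS

theorem squarefreeCoeffs_eq_zero_of_mem_cycleInitIdeal {d : ℕ} (hd : d + 2 ≤ n)
    (hp : p.IsHomogeneous d) (hmem : p ∈ cycleInitIdeal K n) : squarefreeCoeffs p = 0 := by
  ext S
  by_contra hS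
  have hcard := card_le_card (mem_cycleInitIdeal_iff.mp hmem S hS)
  rw [Fin.card_filter_val_lt, card_eq_of_mem_homog (squarefreeCoeffs_mem_homog hp) hS] at hcard
  omega

theorem mem_cycleInitIdeal_of_isHomogeneous {d : ℕ} (hd : n ≤ d) (hp : p.IsHomogeneous d) :
    p ∈ cycleInitIdeal K n := by
  refine mem_cycleInitIdeal_iff.mpr fun S hS => ?_
  have hcard := card_eq_of_mem_homog (squarefreeCoeffs_mem_homog hp) hS
  rw [eq_univ_of_card S (le_antisymm (card_le_univ S) (by simpa [hcard] using hd))]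
  exact subset_univ _

theorem mem_cycleInitIdeal_of_sum_X_mul_mem [CharZero K] (hn : 3 ≤ n) {i : ℕ}
    (hi : 2 * i + 1 < n) (hp : p.IsHomogeneous i) (h : (∑ k, X k) * p ∈ cycleInitIdeal K n) :
    p ∈ cycleInitIdeal K n := by
  have hup := squarefreeCoeffs_eq_zero_of_mem_cycleInitIdeal (by omega)
    (isHomogeneous_sum_X.mul hp) h
  rw [squarefreeCoeffs_sum_X_mul] at hup
  exact mem_cycleInitIdeal_of_squarefreeCoeffs_eq_zero
    (eq_zero_of_up_eq_zero (by rw [Fintype.card_fin]; omega) (squarefreeCoeffs_mem_homog hp) hup)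

theorem exists_sum_X_mul_sub_mem [CharZero K] {i : ℕ} (hi : n ≤ 2 * i + 1) (hin : i + 1 < n)
    {q : MvPolynomial (Fin n) K} (hq : q.IsHomogeneous (i + 1)) :
    ∃ p : MvPolynomial (Fin n) K, p.IsHomogeneous i ∧ (∑ k, X k) * p - q ∈ cycleInitIdeal K n := by
  obtain ⟨x, hx, hxq⟩ := mem_map_up_homog (by rw [Fintype.card_fin]; omega)
    (by rw [Fintype.card_fin]; omega) (squarefreeCoeffs_mem_homog hq)
  refine ⟨ofSquarefreeCoeffs x, isHomogeneous_ofSquarefreeCoeffs hx,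
    mem_cycleInitIdeal_of_squarefreeCoeffs_eq_zero ?_⟩
  rw [map_sub, squarefreeCoeffs_sum_X_mul, squarefreeCoeffs_ofSquarefreeCoeffs, hxq, sub_self]

end CycleInitIdeal

open CycleInitIdeal in
/-- The Artinian algebra `C = K[y_1,…,y_n]/(y_1^2,…,y_n^2, y_1 y_2 ⋯ y_{n-1})`
(the initial ideal of the AOT algebra of the `n`-cycle) has the Weak Lefschetz
Property in characteristic 0: there is a linear form `ℓ` such that every
multiplication map `μ_ℓ : C_i → C_{i+1}` is injective or surjective. -/
theorem stmt5 {K : Type*} [Field K] [CharZero K] (n : ℕ) (hn : 3 ≤ n) :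
    ∃ ℓ ∈ gradedPiece (cycleInitIdeal K n) 1, ∀ i : ℕ,
      (∀ x ∈ gradedPiece (cycleInitIdeal K n) i, ℓ * x = 0 → x = 0) ∨
      (∀ y ∈ gradedPiece (cycleInitIdeal K n) (i + 1),
        ∃ x ∈ gradedPiece (cycleInitIdeal K n) i, ℓ * x = y) := by
  set I := cycleInitIdeal K n
  refine ⟨Ideal.Quotient.mk I (∑ k, X k), ⟨_, isHomogeneous_sum_X, rfl⟩, fun i => ?_⟩
  rcases lt_or_ge (2 * i + 1) n with hi | hi
  · left
    rintro _ ⟨p, hp, rfl⟩ hℓp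
    change Ideal.Quotient.mk I _ * Ideal.Quotient.mk I p = 0 at hℓp
    rw [← map_mul, Ideal.Quotient.eq_zero_iff_mem] at hℓp
    exact Ideal.Quotient.eq_zero_iff_mem.mpr (mem_cycleInitIdeal_of_sum_X_mul_mem hn hi hp hℓp)
  · right
    rintro _ ⟨q, hq, rfl⟩
    rcases le_or_gt n (i + 1) with hin | hin
    · refine ⟨0, zero_mem _, ?_⟩
      rw [mul_zero, eq_comm]
      exact Ideal.Quotient.eq_zero_iff_mem.mpr (mem_cycleInitIdeal_of_isHomogeneous hin hq)
    · obtain ⟨p, hp, hpq⟩ := exists_sum_X_mul_sub_mem hi hin hq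
      refine ⟨_, ⟨p, hp, rfl⟩, ?_⟩
      change Ideal.Quotient.mk I _ * Ideal.Quotient.mk I p = Ideal.Quotient.mk I q
      rw [← map_mul, Ideal.Quotient.mk_eq_mk_iff_sub_mem]
      exact hpq
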